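/- arXiv:2309.05473 — 2 statements merged into one kernel-verified Lean document; each statement's English description precedes it below -/
import Mathlib

section
/- Let X = P(a_1,...,a_6) be a 5-dimensional weighted projective space with positive integer weights, a = a_1 + ⋯ + a_6, p_i = a_i/a, A = −∑_{i=1}^6 p_i log p_i, and B = −(5/2) log(2π) − (1/2) ∑_{i=1}^6 log p_i. Then B + (5/2) A ≥ 41/8. -/
open Real Finset

set_option maxHeartbeats 1000000

private noncomputable def Fn (x : ℝ) : ℝ := -(1/2)*Real.log x - (5/2)*(x*Real.log x)

private lemma logAnchor {p u Lu : ℝ} (hp : 0 < p) (hu : 0 < u) (h : Real.log u ≤ Lu) :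
    Real.log p ≤ Lu + (p/u - 1) := by
  have h1 : Real.log (p/u) ≤ p/u - 1 := Real.log_le_sub_one_of_pos (div_pos hp hu)
  have h2 : Real.log (p/u) = Real.log p - Real.log u := Real.log_div hp.ne' hu.ne'
  linarith

private lemma logub0 : Real.log ((1 : ℝ)/16) ≤ ((-27725887 : ℝ)/10000000) := by
  rw [show ((1 : ℝ)/16) = ((2:ℝ)^4)⁻¹ by norm_num, Real.log_inv, Real.log_pow]
  have := Real.log_two_gt_d9
  push_cast
  nlinarith

private lemma logub1 : Real.log ((803 : ℝ)/10000) ≤ ((-1576241 : ℝ)/625000) := by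
  have hx : |((447 : ℝ)/1250)| < 1 := by rw [abs_of_nonneg (by norm_num : (0:ℝ) ≤ ((447 : ℝ)/1250))]; norm_num
  have h := Real.abs_log_sub_add_sum_range_le hx 16
  have h1 := (abs_le.mp h).2
  simp only [Finset.sum_range_succ, Finset.sum_range_zero] at h1
  push_cast at h1
  rw [abs_of_nonneg (by norm_num : (0:ℝ) ≤ ((447 : ℝ)/1250))] at h1
  norm_num at h1
  have hrw : ((803 : ℝ)/10000) = ((803 : ℝ)/1250)/2^3 := by norm_num
  rw [hrw, Real.log_div (by norm_num) (by norm_num), Real.log_pow]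
  have hl2 := Real.log_two_gt_d9
  push_cast
  norm_num at h1 ⊢
  linarith

private lemma logub2 : Real.log ((961 : ℝ)/10000) ≤ ((-23423659 : ℝ)/10000000) := by
  have hx : |((289 : ℝ)/1250)| < 1 := by rw [abs_of_nonneg (by norm_num : (0:ℝ) ≤ ((289 : ℝ)/1250))]; norm_num
  have h := Real.abs_log_sub_add_sum_range_le hx 11
  have h1 := (abs_le.mp h).2
  simp only [Finset.sum_range_succ, Finset.sum_range_zero] at h1
  push_cast at h1
  rw [abs_of_nonneg (by norm_num : (0:ℝ) ≤ ((289 : ℝ)/1250))] at h1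
  norm_num at h1
  have hrw : ((961 : ℝ)/10000) = ((961 : ℝ)/1250)/2^3 := by norm_num
  rw [hrw, Real.log_div (by norm_num) (by norm_num), Real.log_pow]
  have hl2 := Real.log_two_gt_d9
  push_cast
  norm_num at h1 ⊢
  linarith

private lemma logub3 : Real.log ((1113 : ℝ)/10000) ≤ ((-21955259 : ℝ)/10000000) := by
  have hx : |((137 : ℝ)/1250)| < 1 := by rw [abs_of_nonneg (by norm_num : (0:ℝ) ≤ ((137 : ℝ)/1250))]; norm_num
  have h := Real.abs_log_sub_add_sum_range_le hx 7
  have h1 := (abs_le.mp h).2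
  simp only [Finset.sum_range_succ, Finset.sum_range_zero] at h1
  push_cast at h1
  rw [abs_of_nonneg (by norm_num : (0:ℝ) ≤ ((137 : ℝ)/1250))] at h1
  norm_num at h1
  have hrw : ((1113 : ℝ)/10000) = ((1113 : ℝ)/1250)/2^3 := by norm_num
  rw [hrw, Real.log_div (by norm_num) (by norm_num), Real.log_pow]
  have hl2 := Real.log_two_gt_d9
  push_cast
  norm_num at h1 ⊢
  linarith

private lemma logub4 : Real.log ((1289 : ℝ)/10000) ≤ ((-20487183 : ℝ)/10000000) := by
  have hx : |((1211 : ℝ)/2500)| < 1 := by rw [abs_of_nonneg (by norm_num : (0:ℝ) ≤ ((1211 : ℝ)/2500))]; norm_num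
  have h := Real.abs_log_sub_add_sum_range_le hx 23
  have h1 := (abs_le.mp h).2
  simp only [Finset.sum_range_succ, Finset.sum_range_zero] at h1
  push_cast at h1
  rw [abs_of_nonneg (by norm_num : (0:ℝ) ≤ ((1211 : ℝ)/2500))] at h1
  norm_num at h1
  have hrw : ((1289 : ℝ)/10000) = ((1289 : ℝ)/2500)/2^2 := by norm_num
  rw [hrw, Real.log_div (by norm_num) (by norm_num), Real.log_pow]
  have hl2 := Real.log_two_gt_d9
  push_cast
  norm_num at h1 ⊢
  linarith

private lemma logub5 : Real.log ((387 : ℝ)/2500) ≤ ((-4664053 : ℝ)/2500000) := by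
  have hx : |((238 : ℝ)/625)| < 1 := by rw [abs_of_nonneg (by norm_num : (0:ℝ) ≤ ((238 : ℝ)/625))]; norm_num
  have h := Real.abs_log_sub_add_sum_range_le hx 17
  have h1 := (abs_le.mp h).2
  simp only [Finset.sum_range_succ, Finset.sum_range_zero] at h1
  push_cast at h1
  rw [abs_of_nonneg (by norm_num : (0:ℝ) ≤ ((238 : ℝ)/625))] at h1
  norm_num at h1
  have hrw : ((387 : ℝ)/2500) = ((387 : ℝ)/625)/2^2 := by norm_num
  rw [hrw, Real.log_div (by norm_num) (by norm_num), Real.log_pow]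
  have hl2 := Real.log_two_gt_d9
  push_cast
  norm_num at h1 ⊢
  linarith

private lemma logub6 : Real.log ((991 : ℝ)/5000) ≤ ((-8092393 : ℝ)/5000000) := by
  have hx : |((259 : ℝ)/1250)| < 1 := by rw [abs_of_nonneg (by norm_num : (0:ℝ) ≤ ((259 : ℝ)/1250))]; norm_num
  have h := Real.abs_log_sub_add_sum_range_le hx 10
  have h1 := (abs_le.mp h).2
  simp only [Finset.sum_range_succ, Finset.sum_range_zero] at h1
  push_cast at h1
  rw [abs_of_nonneg (by norm_num : (0:ℝ) ≤ ((259 : ℝ)/1250))] at h1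
  norm_num at h1
  have hrw : ((991 : ℝ)/5000) = ((991 : ℝ)/1250)/2^2 := by norm_num
  rw [hrw, Real.log_div (by norm_num) (by norm_num), Real.log_pow]
  have hl2 := Real.log_two_gt_d9
  push_cast
  norm_num at h1 ⊢
  linarith

private lemma logub7 : Real.log ((168 : ℝ)/625) ≤ ((-105103 : ℝ)/80000) := by
  have hx : |((289 : ℝ)/625)| < 1 := by rw [abs_of_nonneg (by norm_num : (0:ℝ) ≤ ((289 : ℝ)/625))]; norm_num
  have h := Real.abs_log_sub_add_sum_range_le hx 21
  have h1 := (abs_le.mp h).2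
  simp only [Finset.sum_range_succ, Finset.sum_range_zero] at h1
  push_cast at h1
  rw [abs_of_nonneg (by norm_num : (0:ℝ) ≤ ((289 : ℝ)/625))] at h1
  norm_num at h1
  have hrw : ((168 : ℝ)/625) = ((336 : ℝ)/625)/2^1 := by norm_num
  rw [hrw, Real.log_div (by norm_num) (by norm_num), Real.log_pow]
  have hl2 := Real.log_two_gt_d9
  push_cast
  norm_num at h1 ⊢
  linarith

private lemma logub8 : Real.log ((461 : ℝ)/1250) ≤ ((-9975007 : ℝ)/10000000) := by
  have hx : |((164 : ℝ)/625)| < 1 := by rw [abs_of_nonneg (by norm_num : (0:ℝ) ≤ ((164 : ℝ)/625))]; norm_num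
  have h := Real.abs_log_sub_add_sum_range_le hx 12
  have h1 := (abs_le.mp h).2
  simp only [Finset.sum_range_succ, Finset.sum_range_zero] at h1
  push_cast at h1
  rw [abs_of_nonneg (by norm_num : (0:ℝ) ≤ ((164 : ℝ)/625))] at h1
  norm_num at h1
  have hrw : ((461 : ℝ)/1250) = ((461 : ℝ)/625)/2^1 := by norm_num
  rw [hrw, Real.log_div (by norm_num) (by norm_num), Real.log_pow]
  have hl2 := Real.log_two_gt_d9
  push_cast
  norm_num at h1 ⊢
  linarith

private lemma logub9 : Real.log ((1199 : ℝ)/2500) ≤ ((-1837007 : ℝ)/2500000) := by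
  have hx : |((51 : ℝ)/1250)| < 1 := by rw [abs_of_nonneg (by norm_num : (0:ℝ) ≤ ((51 : ℝ)/1250))]; norm_num
  have h := Real.abs_log_sub_add_sum_range_le hx 5
  have h1 := (abs_le.mp h).2
  simp only [Finset.sum_range_succ, Finset.sum_range_zero] at h1
  push_cast at h1
  rw [abs_of_nonneg (by norm_num : (0:ℝ) ≤ ((51 : ℝ)/1250))] at h1
  norm_num at h1
  have hrw : ((1199 : ℝ)/2500) = ((1199 : ℝ)/1250)/2^1 := by norm_num
  rw [hrw, Real.log_div (by norm_num) (by norm_num), Real.log_pow]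
  have hl2 := Real.log_two_gt_d9
  push_cast
  norm_num at h1 ⊢
  linarith

private lemma logub10 : Real.log ((113 : ℝ)/200) ≤ ((-1141859 : ℝ)/2000000) := by
  have hx : |((87 : ℝ)/200)| < 1 := by rw [abs_of_nonneg (by norm_num : (0:ℝ) ≤ ((87 : ℝ)/200))]; norm_num
  have h := Real.abs_log_sub_add_sum_range_le hx 20
  have h1 := (abs_le.mp h).2
  simp only [Finset.sum_range_succ, Finset.sum_range_zero] at h1
  push_cast at h1
  rw [abs_of_nonneg (by norm_num : (0:ℝ) ≤ ((87 : ℝ)/200))] at h1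
  norm_num at h1
  have hrw : ((113 : ℝ)/200) = ((113 : ℝ)/200)/2^0 := by norm_num
  rw [hrw, Real.log_div (by norm_num) (by norm_num), Real.log_pow]
  have hl2 := Real.log_two_gt_d9
  push_cast
  norm_num at h1 ⊢
  linarith

private lemma logub11 : Real.log ((1 : ℝ)/32) ≤ ((-34657359 : ℝ)/10000000) := by
  rw [show ((1 : ℝ)/32) = ((2:ℝ)^5)⁻¹ by norm_num, Real.log_inv, Real.log_pow]
  have := Real.log_two_gt_d9
  push_cast
  nlinarith

private lemma logub12 : Real.log ((9 : ℝ)/200) ≤ ((-15505463 : ℝ)/5000000) := by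
  have hx : |((7 : ℝ)/25)| < 1 := by rw [abs_of_nonneg (by norm_num : (0:ℝ) ≤ ((7 : ℝ)/25))]; norm_num
  have h := Real.abs_log_sub_add_sum_range_le hx 12
  have h1 := (abs_le.mp h).2
  simp only [Finset.sum_range_succ, Finset.sum_range_zero] at h1
  push_cast at h1
  rw [abs_of_nonneg (by norm_num : (0:ℝ) ≤ ((7 : ℝ)/25))] at h1
  norm_num at h1
  have hrw : ((9 : ℝ)/200) = ((18 : ℝ)/25)/2^4 := by norm_num
  rw [hrw, Real.log_div (by norm_num) (by norm_num), Real.log_pow]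
  have hl2 := Real.log_two_gt_d9
  push_cast
  norm_num at h1 ⊢
  linarith

private lemma logub13 : Real.log ((57 : ℝ)/1000) ≤ ((-28647039 : ℝ)/10000000) := by
  have hx : |((11 : ℝ)/125)| < 1 := by rw [abs_of_nonneg (by norm_num : (0:ℝ) ≤ ((11 : ℝ)/125))]; norm_num
  have h := Real.abs_log_sub_add_sum_range_le hx 6
  have h1 := (abs_le.mp h).2
  simp only [Finset.sum_range_succ, Finset.sum_range_zero] at h1
  push_cast at h1
  rw [abs_of_nonneg (by norm_num : (0:ℝ) ≤ ((11 : ℝ)/125))] at h1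
  norm_num at h1
  have hrw : ((57 : ℝ)/1000) = ((114 : ℝ)/125)/2^4 := by norm_num
  rw [hrw, Real.log_div (by norm_num) (by norm_num), Real.log_pow]
  have hl2 := Real.log_two_gt_d9
  push_cast
  norm_num at h1 ⊢
  linarith

private lemma logub14 : Real.log ((67 : ℝ)/1000) ≤ ((-43249 : ℝ)/16000) := by
  have hx : |((58 : ℝ)/125)| < 1 := by rw [abs_of_nonneg (by norm_num : (0:ℝ) ≤ ((58 : ℝ)/125))]; norm_num
  have h := Real.abs_log_sub_add_sum_range_le hx 21
  have h1 := (abs_le.mp h).2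
  simp only [Finset.sum_range_succ, Finset.sum_range_zero] at h1
  push_cast at h1
  rw [abs_of_nonneg (by norm_num : (0:ℝ) ≤ ((58 : ℝ)/125))] at h1
  norm_num at h1
  have hrw : ((67 : ℝ)/1000) = ((67 : ℝ)/125)/2^3 := by norm_num
  rw [hrw, Real.log_div (by norm_num) (by norm_num), Real.log_pow]
  have hl2 := Real.log_two_gt_d9
  push_cast
  norm_num at h1 ⊢
  linarith

private lemma logub15 : Real.log ((77 : ℝ)/1000) ≤ ((-25639497 : ℝ)/10000000) := by
  have hx : |((48 : ℝ)/125)| < 1 := by rw [abs_of_nonneg (by norm_num : (0:ℝ) ≤ ((48 : ℝ)/125))]; norm_num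
  have h := Real.abs_log_sub_add_sum_range_le hx 17
  have h1 := (abs_le.mp h).2
  simp only [Finset.sum_range_succ, Finset.sum_range_zero] at h1
  push_cast at h1
  rw [abs_of_nonneg (by norm_num : (0:ℝ) ≤ ((48 : ℝ)/125))] at h1
  norm_num at h1
  have hrw : ((77 : ℝ)/1000) = ((77 : ℝ)/125)/2^3 := by norm_num
  rw [hrw, Real.log_div (by norm_num) (by norm_num), Real.log_pow]
  have hl2 := Real.log_two_gt_d9
  push_cast
  norm_num at h1 ⊢
  linarith

private lemma logub16 : Real.log ((9 : ℝ)/100) ≤ ((-4815891 : ℝ)/2000000) := by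
  have hx : |((7 : ℝ)/25)| < 1 := by rw [abs_of_nonneg (by norm_num : (0:ℝ) ≤ ((7 : ℝ)/25))]; norm_num
  have h := Real.abs_log_sub_add_sum_range_le hx 12
  have h1 := (abs_le.mp h).2
  simp only [Finset.sum_range_succ, Finset.sum_range_zero] at h1
  push_cast at h1
  rw [abs_of_nonneg (by norm_num : (0:ℝ) ≤ ((7 : ℝ)/25))] at h1
  norm_num at h1
  have hrw : ((9 : ℝ)/100) = ((18 : ℝ)/25)/2^3 := by norm_num
  rw [hrw, Real.log_div (by norm_num) (by norm_num), Real.log_pow]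
  have hl2 := Real.log_two_gt_d9
  push_cast
  norm_num at h1 ⊢
  linarith

private lemma logub17 : Real.log ((119 : ℝ)/1000) ≤ ((-21286317 : ℝ)/10000000) := by
  have hx : |((6 : ℝ)/125)| < 1 := by rw [abs_of_nonneg (by norm_num : (0:ℝ) ≤ ((6 : ℝ)/125))]; norm_num
  have h := Real.abs_log_sub_add_sum_range_le hx 5
  have h1 := (abs_le.mp h).2
  simp only [Finset.sum_range_succ, Finset.sum_range_zero] at h1
  push_cast at h1
  rw [abs_of_nonneg (by norm_num : (0:ℝ) ≤ ((6 : ℝ)/125))] at h1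
  norm_num at h1
  have hrw : ((119 : ℝ)/1000) = ((119 : ℝ)/125)/2^3 := by norm_num
  rw [hrw, Real.log_div (by norm_num) (by norm_num), Real.log_pow]
  have hl2 := Real.log_two_gt_d9
  push_cast
  norm_num at h1 ⊢
  linarith

private lemma logub18 : Real.log ((97 : ℝ)/500) ≤ ((-1639897 : ℝ)/1000000) := by
  have hx : |((28 : ℝ)/125)| < 1 := by rw [abs_of_nonneg (by norm_num : (0:ℝ) ≤ ((28 : ℝ)/125))]; norm_num
  have h := Real.abs_log_sub_add_sum_range_le hx 10
  have h1 := (abs_le.mp h).2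
  simp only [Finset.sum_range_succ, Finset.sum_range_zero] at h1
  push_cast at h1
  rw [abs_of_nonneg (by norm_num : (0:ℝ) ≤ ((28 : ℝ)/125))] at h1
  norm_num at h1
  have hrw : ((97 : ℝ)/500) = ((97 : ℝ)/125)/2^2 := by norm_num
  rw [hrw, Real.log_div (by norm_num) (by norm_num), Real.log_pow]
  have hl2 := Real.log_two_gt_d9
  push_cast
  norm_num at h1 ⊢
  linarith

private lemma logub19 : Real.log ((93 : ℝ)/250) ≤ ((-9888613 : ℝ)/10000000) := by
  have hx : |((32 : ℝ)/125)| < 1 := by rw [abs_of_nonneg (by norm_num : (0:ℝ) ≤ ((32 : ℝ)/125))]; norm_num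
  have h := Real.abs_log_sub_add_sum_range_le hx 12
  have h1 := (abs_le.mp h).2
  simp only [Finset.sum_range_succ, Finset.sum_range_zero] at h1
  push_cast at h1
  rw [abs_of_nonneg (by norm_num : (0:ℝ) ≤ ((32 : ℝ)/125))] at h1
  norm_num at h1
  have hrw : ((93 : ℝ)/250) = ((93 : ℝ)/125)/2^1 := by norm_num
  rw [hrw, Real.log_div (by norm_num) (by norm_num), Real.log_pow]
  have hl2 := Real.log_two_gt_d9
  push_cast
  norm_num at h1 ⊢
  linarith

private lemma logub20 : Real.log ((3 : ℝ)/5) ≤ ((-1021651 : ℝ)/2000000) := by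
  have hx : |((2 : ℝ)/5)| < 1 := by rw [abs_of_nonneg (by norm_num : (0:ℝ) ≤ ((2 : ℝ)/5))]; norm_num
  have h := Real.abs_log_sub_add_sum_range_le hx 18
  have h1 := (abs_le.mp h).2
  simp only [Finset.sum_range_succ, Finset.sum_range_zero] at h1
  push_cast at h1
  rw [abs_of_nonneg (by norm_num : (0:ℝ) ≤ ((2 : ℝ)/5))] at h1
  norm_num at h1
  have hrw : ((3 : ℝ)/5) = ((3 : ℝ)/5)/2^0 := by norm_num
  rw [hrw, Real.log_div (by norm_num) (by norm_num), Real.log_pow]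
  have hl2 := Real.log_two_gt_d9
  push_cast
  norm_num at h1 ⊢
  linarith

private lemma logub21 : Real.log ((4 : ℝ)/5) ≤ ((-446287 : ℝ)/2000000) := by
  have hx : |((1 : ℝ)/5)| < 1 := by rw [abs_of_nonneg (by norm_num : (0:ℝ) ≤ ((1 : ℝ)/5))]; norm_num
  have h := Real.abs_log_sub_add_sum_range_le hx 10
  have h1 := (abs_le.mp h).2
  simp only [Finset.sum_range_succ, Finset.sum_range_zero] at h1
  push_cast at h1
  rw [abs_of_nonneg (by norm_num : (0:ℝ) ≤ ((1 : ℝ)/5))] at h1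
  norm_num at h1
  have hrw : ((4 : ℝ)/5) = ((4 : ℝ)/5)/2^0 := by norm_num
  rw [hrw, Real.log_div (by norm_num) (by norm_num), Real.log_pow]
  have hl2 := Real.log_two_gt_d9
  push_cast
  norm_num at h1 ⊢
  linarith

private lemma log5_lb : ((8047189 : ℝ)/5000000) ≤ Real.log 5 := by
  have hx : |((3 : ℝ)/8)| < 1 := by rw [abs_of_nonneg (by norm_num : (0:ℝ) ≤ ((3 : ℝ)/8))]; norm_num
  have h := Real.abs_log_sub_add_sum_range_le hx 16
  have h1 := (abs_le.mp h).1
  simp only [Finset.sum_range_succ, Finset.sum_range_zero] at h1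
  push_cast at h1
  rw [abs_of_nonneg (by norm_num : (0:ℝ) ≤ ((3 : ℝ)/8))] at h1
  norm_num at h1
  have h58 : Real.log ((5:ℝ)/8) = Real.log 5 - 3*Real.log 2 := by
    rw [show ((5:ℝ)/8) = 5/2^3 by norm_num, Real.log_div (by norm_num) (by norm_num), Real.log_pow]
    push_cast; ring
  have hl2 := Real.log_two_gt_d9
  norm_num at h58
  linarith

private lemma log2pi_ub : Real.log (2*Real.pi) ≤ ((4594693 : ℝ)/2500000) := by
  have hpi : (2:ℝ)*Real.pi < ((3141593 : ℝ)/500000) := by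
    have := Real.pi_lt_d6; linarith
  have hmono : Real.log (2*Real.pi) ≤ Real.log ((3141593 : ℝ)/500000) :=
    (Real.log_le_log_iff (by positivity) (by positivity)).mpr hpi.le
  refine hmono.trans ?_
  have hx : |((858407 : ℝ)/4000000)| < 1 := by rw [abs_of_nonneg (by norm_num : (0:ℝ) ≤ ((858407 : ℝ)/4000000))]; norm_num
  have h := Real.abs_log_sub_add_sum_range_le hx 12
  have h1 := (abs_le.mp h).2
  simp only [Finset.sum_range_succ, Finset.sum_range_zero] at h1
  push_cast at h1
  rw [abs_of_nonneg (by norm_num : (0:ℝ) ≤ ((858407 : ℝ)/4000000))] at h1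
  norm_num at h1
  have hrw : ((3141593 : ℝ)/500000) = ((3141593 : ℝ)/4000000)*2^3 := by norm_num
  rw [hrw, Real.log_mul (by norm_num) (by norm_num), Real.log_pow]
  have hl2 := Real.log_two_lt_d9
  push_cast
  norm_num at h1 ⊢
  linarith

private lemma lem1 (p : ℝ) (h0 : 0 < p) (hup : p ≤ ((3 : ℝ)/5)) :
    ((18537 : ℝ)/10000) + ((-7 : ℝ)/5)*p ≤ Fn p := by
  unfold Fn
  rcases le_total p ((1 : ℝ)/16) with htl|htl
  · -- tail
    have hlp := logAnchor h0 (by norm_num : (0:ℝ) < ((1 : ℝ)/16)) logub0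
    have hplp := mul_le_mul_of_nonneg_left hlp h0.le
    nlinarith [hlp, hplp, mul_nonneg h0.le (sub_nonneg.2 htl), h0.le]
  rcases le_total p ((803 : ℝ)/10000) with hh0|hh0
  ·
      have hlp := logAnchor h0 (by norm_num : (0:ℝ) < ((1 : ℝ)/16)) logub0
      have hplp := mul_le_mul_of_nonneg_left hlp h0.le
      nlinarith [hlp, hplp, mul_nonneg (sub_nonneg.2 htl) (sub_nonneg.2 hh0), h0.le]
  rcases le_total p ((961 : ℝ)/10000) with hh1|hh1
  ·
      have hlp := logAnchor h0 (by norm_num : (0:ℝ) < ((803 : ℝ)/10000)) logub1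
      have hplp := mul_le_mul_of_nonneg_left hlp h0.le
      nlinarith [hlp, hplp, mul_nonneg (sub_nonneg.2 hh0) (sub_nonneg.2 hh1), h0.le]
  rcases le_total p ((1113 : ℝ)/10000) with hh2|hh2
  ·
      have hlp := logAnchor h0 (by norm_num : (0:ℝ) < ((961 : ℝ)/10000)) logub2
      have hplp := mul_le_mul_of_nonneg_left hlp h0.le
      nlinarith [hlp, hplp, mul_nonneg (sub_nonneg.2 hh1) (sub_nonneg.2 hh2), h0.le]
  rcases le_total p ((1289 : ℝ)/10000) with hh3|hh3
  ·
      have hlp := logAnchor h0 (by norm_num : (0:ℝ) < ((1113 : ℝ)/10000)) logub3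
      have hplp := mul_le_mul_of_nonneg_left hlp h0.le
      nlinarith [hlp, hplp, mul_nonneg (sub_nonneg.2 hh2) (sub_nonneg.2 hh3), h0.le]
  rcases le_total p ((387 : ℝ)/2500) with hh4|hh4
  ·
      have hlp := logAnchor h0 (by norm_num : (0:ℝ) < ((1289 : ℝ)/10000)) logub4
      have hplp := mul_le_mul_of_nonneg_left hlp h0.le
      nlinarith [hlp, hplp, mul_nonneg (sub_nonneg.2 hh3) (sub_nonneg.2 hh4), h0.le]
  rcases le_total p ((991 : ℝ)/5000) with hh5|hh5
  ·
      have hlp := logAnchor h0 (by norm_num : (0:ℝ) < ((387 : ℝ)/2500)) logub5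
      have hplp := mul_le_mul_of_nonneg_left hlp h0.le
      nlinarith [hlp, hplp, mul_nonneg (sub_nonneg.2 hh4) (sub_nonneg.2 hh5), h0.le]
  rcases le_total p ((168 : ℝ)/625) with hh6|hh6
  ·
      have hlp := logAnchor h0 (by norm_num : (0:ℝ) < ((991 : ℝ)/5000)) logub6
      have hplp := mul_le_mul_of_nonneg_left hlp h0.le
      nlinarith [hlp, hplp, mul_nonneg (sub_nonneg.2 hh5) (sub_nonneg.2 hh6), h0.le]
  rcases le_total p ((461 : ℝ)/1250) with hh7|hh7
  ·
      have hlp := logAnchor h0 (by norm_num : (0:ℝ) < ((168 : ℝ)/625)) logub7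
      have hplp := mul_le_mul_of_nonneg_left hlp h0.le
      nlinarith [hlp, hplp, mul_nonneg (sub_nonneg.2 hh6) (sub_nonneg.2 hh7), h0.le]
  rcases le_total p ((1199 : ℝ)/2500) with hh8|hh8
  ·
      have hlp := logAnchor h0 (by norm_num : (0:ℝ) < ((461 : ℝ)/1250)) logub8
      have hplp := mul_le_mul_of_nonneg_left hlp h0.le
      nlinarith [hlp, hplp, mul_nonneg (sub_nonneg.2 hh7) (sub_nonneg.2 hh8), h0.le]
  rcases le_total p ((113 : ℝ)/200) with hh9|hh9
  ·
      have hlp := logAnchor h0 (by norm_num : (0:ℝ) < ((1199 : ℝ)/2500)) logub9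
      have hplp := mul_le_mul_of_nonneg_left hlp h0.le
      nlinarith [hlp, hplp, mul_nonneg (sub_nonneg.2 hh8) (sub_nonneg.2 hh9), h0.le]
  have hlp := logAnchor h0 (by norm_num : (0:ℝ) < ((113 : ℝ)/200)) logub10
  have hplp := mul_le_mul_of_nonneg_left hlp h0.le
  nlinarith [hlp, hplp, mul_nonneg (sub_nonneg.2 hh9) (sub_nonneg.2 hup), h0.le]

private lemma lem2 (p : ℝ) (h0 : 0 < p) (hup : p ≤ ((2 : ℝ)/5)) :
    ((49 : ℝ)/25) + ((-5 : ℝ)/2)*p ≤ Fn p := by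
  unfold Fn
  rcases le_total p ((1 : ℝ)/32) with htl|htl
  · -- tail
    have hlp := logAnchor h0 (by norm_num : (0:ℝ) < ((1 : ℝ)/32)) logub11
    have hplp := mul_le_mul_of_nonneg_left hlp h0.le
    nlinarith [hlp, hplp, mul_nonneg h0.le (sub_nonneg.2 htl), h0.le]
  rcases le_total p ((9 : ℝ)/200) with hh0|hh0
  ·
      have hlp := logAnchor h0 (by norm_num : (0:ℝ) < ((1 : ℝ)/32)) logub11
      have hplp := mul_le_mul_of_nonneg_left hlp h0.le
      nlinarith [hlp, hplp, mul_nonneg (sub_nonneg.2 htl) (sub_nonneg.2 hh0), h0.le]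
  rcases le_total p ((57 : ℝ)/1000) with hh1|hh1
  ·
      have hlp := logAnchor h0 (by norm_num : (0:ℝ) < ((9 : ℝ)/200)) logub12
      have hplp := mul_le_mul_of_nonneg_left hlp h0.le
      nlinarith [hlp, hplp, mul_nonneg (sub_nonneg.2 hh0) (sub_nonneg.2 hh1), h0.le]
  rcases le_total p ((67 : ℝ)/1000) with hh2|hh2
  ·
      have hlp := logAnchor h0 (by norm_num : (0:ℝ) < ((57 : ℝ)/1000)) logub13
      have hplp := mul_le_mul_of_nonneg_left hlp h0.le
      nlinarith [hlp, hplp, mul_nonneg (sub_nonneg.2 hh1) (sub_nonneg.2 hh2), h0.le]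
  rcases le_total p ((77 : ℝ)/1000) with hh3|hh3
  ·
      have hlp := logAnchor h0 (by norm_num : (0:ℝ) < ((67 : ℝ)/1000)) logub14
      have hplp := mul_le_mul_of_nonneg_left hlp h0.le
      nlinarith [hlp, hplp, mul_nonneg (sub_nonneg.2 hh2) (sub_nonneg.2 hh3), h0.le]
  rcases le_total p ((9 : ℝ)/100) with hh4|hh4
  ·
      have hlp := logAnchor h0 (by norm_num : (0:ℝ) < ((77 : ℝ)/1000)) logub15
      have hplp := mul_le_mul_of_nonneg_left hlp h0.le
      nlinarith [hlp, hplp, mul_nonneg (sub_nonneg.2 hh3) (sub_nonneg.2 hh4), h0.le]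
  rcases le_total p ((119 : ℝ)/1000) with hh5|hh5
  ·
      have hlp := logAnchor h0 (by norm_num : (0:ℝ) < ((9 : ℝ)/100)) logub16
      have hplp := mul_le_mul_of_nonneg_left hlp h0.le
      nlinarith [hlp, hplp, mul_nonneg (sub_nonneg.2 hh4) (sub_nonneg.2 hh5), h0.le]
  rcases le_total p ((97 : ℝ)/500) with hh6|hh6
  ·
      have hlp := logAnchor h0 (by norm_num : (0:ℝ) < ((119 : ℝ)/1000)) logub17
      have hplp := mul_le_mul_of_nonneg_left hlp h0.le
      nlinarith [hlp, hplp, mul_nonneg (sub_nonneg.2 hh5) (sub_nonneg.2 hh6), h0.le]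
  rcases le_total p ((93 : ℝ)/250) with hh7|hh7
  ·
      have hlp := logAnchor h0 (by norm_num : (0:ℝ) < ((97 : ℝ)/500)) logub18
      have hplp := mul_le_mul_of_nonneg_left hlp h0.le
      nlinarith [hlp, hplp, mul_nonneg (sub_nonneg.2 hh6) (sub_nonneg.2 hh7), h0.le]
  have hlp := logAnchor h0 (by norm_num : (0:ℝ) < ((93 : ℝ)/250)) logub19
  have hplp := mul_le_mul_of_nonneg_left hlp h0.le
  nlinarith [hlp, hplp, mul_nonneg (sub_nonneg.2 hh7) (sub_nonneg.2 hup), h0.le]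

private lemma lem3 (p : ℝ) (hlo : ((3 : ℝ)/5) ≤ p) (hup : p ≤ ((9 : ℝ)/10)) :
    ((24217 : ℝ)/10000) + ((-5 : ℝ)/2)*p ≤ Fn p := by
  unfold Fn
  have h0 : (0:ℝ) < p := by linarith [hlo]
  rcases le_total p ((4 : ℝ)/5) with hh0|hh0
  ·
      have hlp := logAnchor h0 (by norm_num : (0:ℝ) < ((3 : ℝ)/5)) logub20
      have hplp := mul_le_mul_of_nonneg_left hlp h0.le
      nlinarith [hlp, hplp, mul_nonneg (sub_nonneg.2 hlo) (sub_nonneg.2 hh0), h0.le]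
  have hlp := logAnchor h0 (by norm_num : (0:ℝ) < ((4 : ℝ)/5)) logub21
  have hplp := mul_le_mul_of_nonneg_left hlp h0.le
  nlinarith [hlp, hplp, mul_nonneg (sub_nonneg.2 hh0) (sub_nonneg.2 hup), h0.le]

/-- For a five-dimensional weighted projective space `P(a₁,…,a₆)` with asymptotic
coefficients `A` and `B`, one has `B + (5/2)·A ≥ 41/8`. -/
theorem stmt_5 (a : Fin 6 → ℕ) (ha : ∀ i, 0 < a i)
    (s : ℕ) (hs : s = ∑ i, a i)
    (p : Fin 6 → ℝ) (hp : ∀ i, p i = (a i : ℝ) / (s : ℝ))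
    (A B : ℝ)
    (hA : A = -∑ i, p i * Real.log (p i))
    (hB : B = -(5 / 2 : ℝ) * Real.log (2 * Real.pi) - (1 / 2) * ∑ i, Real.log (p i)) :
    41 / 8 ≤ B + (5 / 2) * A := by
  have hs0 : 0 < s := by
    rw [hs]
    exact Finset.sum_pos (fun i _ => ha i) ⟨0, Finset.mem_univ 0⟩
  have hsR : (0:ℝ) < (s:ℝ) := by exact_mod_cast hs0
  have hp0 : ∀ i, 0 < p i := fun i => by
    rw [hp i]; exact div_pos (by exact_mod_cast ha i) hsR
  have hpsum : ∑ i, p i = 1 := by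
    have h1 : ∑ i, p i = (∑ i, (a i : ℝ)) / (s:ℝ) := by
      rw [Finset.sum_div]; exact Finset.sum_congr rfl (fun i _ => hp i)
    have h2 : (∑ i, (a i : ℝ)) = (s:ℝ) := by rw [hs]; push_cast; ring
    rw [h1, h2, div_self hsR.ne']
  have hple : ∀ i, p i ≤ 1 := fun i => by
    have h := Finset.single_le_sum (f := p) (fun j _ => (hp0 j).le) (Finset.mem_univ i)
    rw [hpsum] at h; exact h
  have key : ((97198:ℝ)/10000) ≤ ∑ i, Fn (p i) := by
    by_cases hbig : ∀ i, p i ≤ ((3:ℝ)/5)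
    · have h1 : ∑ i, (((18537 : ℝ)/10000) + ((-7 : ℝ)/5)*p i) ≤ ∑ i, Fn (p i) :=
        Finset.sum_le_sum (fun i _ => lem1 (p i) (hp0 i) (hbig i))
      have h2 : ∑ i, (((18537 : ℝ)/10000) + ((-7 : ℝ)/5)*p i) = 6*((18537 : ℝ)/10000) + ((-7 : ℝ)/5) := by
        rw [Finset.sum_add_distrib, ← Finset.mul_sum, hpsum, Finset.sum_const]
        simp [Finset.card_univ]
      rw [h2] at h1
      linarith
    · push_neg at hbig
      obtain ⟨j, hj⟩ := hbig
      have hjmem := Finset.mem_univ j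
      have hsplitp := Finset.add_sum_erase Finset.univ p hjmem
      have hsum_erase : ∑ i ∈ Finset.univ.erase j, p i = 1 - p j := by
        rw [hpsum] at hsplitp; linarith
      have hcard : (Finset.univ.erase j).card = 5 := by
        rw [Finset.card_erase_of_mem hjmem]
        simp [Finset.card_univ]
      have hsmall : ∀ i ∈ Finset.univ.erase j, p i ≤ 1 - p j := fun i hi => by
        rw [← hsum_erase]
        exact Finset.single_le_sum (f := p) (fun k _ => (hp0 k).le) hi
      have hFsplit := Finset.add_sum_erase Finset.univ (fun i => Fn (p i)) hjmem
      by_cases h9 : p j ≤ ((9:ℝ)/10)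
      · -- case 2a
        have hbigf : ((24217 : ℝ)/10000) + ((-5 : ℝ)/2)*p j ≤ Fn (p j) := lem3 (p j) (by linarith) h9
        have hsm : ∑ i ∈ Finset.univ.erase j, (((49 : ℝ)/25) + ((-5 : ℝ)/2)*p i)
            ≤ ∑ i ∈ Finset.univ.erase j, Fn (p i) :=
          Finset.sum_le_sum (fun i hi => lem2 (p i) (hp0 i) (by
            have := hsmall i hi; linarith))
        have hval : ∑ i ∈ Finset.univ.erase j, (((49 : ℝ)/25) + ((-5 : ℝ)/2)*p i)
            = 5*((49 : ℝ)/25) + ((-5 : ℝ)/2)*(1 - p j) := by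
          rw [Finset.sum_add_distrib, ← Finset.mul_sum, hsum_erase, Finset.sum_const, hcard]
          push_cast; ring
        rw [hval] at hsm
        have hgoal : ((97198:ℝ)/10000) ≤ Fn (p j) + ∑ i ∈ Finset.univ.erase j, Fn (p i) := by
          linarith
        rw [← hFsplit]
        exact hgoal
      · -- case 2b
        push_neg at h9
        have hT0 : (0:ℝ) < 1 - p j := by
          rw [← hsum_erase]
          refine Finset.sum_pos (fun i _ => hp0 i) ?_
          rw [← Finset.card_pos, hcard]; norm_num
        have hT10 : 1 - p j < 1/10 := by linarith
        have h5T : (0:ℝ) < (1 - p j)/5 := by linarith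
        have hlogs : ∑ i ∈ Finset.univ.erase j, Real.log (p i)
            ≤ 5 * Real.log ((1 - p j)/5) := by
          have hsum1 : ∑ i ∈ Finset.univ.erase j, Real.log (p i)
              ≤ ∑ i ∈ Finset.univ.erase j,
                (Real.log ((1 - p j)/5) + (p i/((1 - p j)/5) - 1)) :=
            Finset.sum_le_sum (fun i hi => logAnchor (hp0 i) h5T le_rfl)
          have hsum2 : ∑ i ∈ Finset.univ.erase j,
              (Real.log ((1 - p j)/5) + (p i/((1 - p j)/5) - 1))
              = 5 * Real.log ((1 - p j)/5)
                + ((∑ i ∈ Finset.univ.erase j, p i)/((1 - p j)/5) - 5) := by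
            rw [Finset.sum_add_distrib, Finset.sum_const, hcard]
            have h3 : ∑ i ∈ Finset.univ.erase j, (p i/((1 - p j)/5) - 1)
                = (∑ i ∈ Finset.univ.erase j, p i)/((1 - p j)/5)
                  - ((Finset.univ.erase j).card : ℝ) := by
              rw [Finset.sum_sub_distrib, ← Finset.sum_div, Finset.sum_const]
              simp
            rw [h3, hcard]
            push_cast; ring
          rw [hsum2, hsum_erase] at hsum1
          have hcancel : (1 - p j)/((1 - p j)/5) = 5 := by
            field_simp
          rw [hcancel] at hsum1
          linarith
        have hfsm : ∑ i ∈ Finset.univ.erase j, (-(1/2)*Real.log (p i))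
            ≤ ∑ i ∈ Finset.univ.erase j, Fn (p i) := by
          refine Finset.sum_le_sum (fun i hi => ?_)
          have hpl : p i * Real.log (p i) ≤ 0 :=
            mul_nonpos_of_nonneg_of_nonpos (hp0 i).le
              (Real.log_nonpos (hp0 i).le (hple i))
          unfold Fn
          linarith
        have hsumlog : ∑ i ∈ Finset.univ.erase j, (-(1/2)*Real.log (p i))
            = -(1/2) * ∑ i ∈ Finset.univ.erase j, Real.log (p i) := by
          rw [← Finset.mul_sum]
        have hFj : (0:ℝ) ≤ Fn (p j) := by
          have hpl : p j * Real.log (p j) ≤ 0 :=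
            mul_nonpos_of_nonneg_of_nonpos (hp0 j).le
              (Real.log_nonpos (hp0 j).le (hple j))
          have hlj : Real.log (p j) ≤ 0 := Real.log_nonpos (hp0 j).le (hple j)
          unfold Fn
          linarith
        have hlogT : Real.log (1 - p j) < Real.log (1/10) :=
          Real.log_lt_log hT0 (by linarith)
        have hlog110 : Real.log ((1:ℝ)/10) = -(Real.log 2 + Real.log 5) := by
          rw [show ((1:ℝ)/10) = ((2:ℝ)*5)⁻¹ by norm_num, Real.log_inv,
            Real.log_mul (by norm_num) (by norm_num)]
        have hlogT5 : Real.log ((1 - p j)/5) = Real.log (1 - p j) - Real.log 5 :=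
          Real.log_div hT0.ne' (by norm_num)
        have hl5 := log5_lb
        have hl2 := Real.log_two_gt_d9
        have hl2' : ((6931471803:ℝ)/10000000000) < Real.log 2 := by
          rw [show ((6931471803:ℝ)/10000000000) = 0.6931471803 by norm_num]
          exact hl2
        have hgoal : ((97198:ℝ)/10000) ≤ Fn (p j) + ∑ i ∈ Finset.univ.erase j, Fn (p i) := by
          rw [hlogT5] at hlogs
          rw [hsumlog] at hfsm
          linarith
        rw [← hFsplit]
        exact hgoal
  have hsplit : ∑ i, Fn (p i)
      = -(1/2)*(∑ i, Real.log (p i)) - (5/2)*(∑ i, p i*Real.log (p i)) := by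
    unfold Fn
    rw [Finset.sum_sub_distrib, ← Finset.mul_sum, ← Finset.mul_sum]
  rw [hsplit] at key
  have h2pi := log2pi_ub
  rw [hB, hA]
  linarith
end

section
/- Let α_1,...,α_N be linear forms on ℝ² with α = ∑ α_i, let x* ∈ ℝ² satisfy α_i(x*) > 0 for all i and the Lagrange condition ∑_{i=1}^N α_i · log(α_i(x*)) = (λ−1) α for some λ ∈ ℝ (equality of linear forms on ℝ²). Set p_i = α_i(x*)/α(x*). Then for every k ∈ ℤ², the product ∏_{i=1}^N p_i^{α_i(k)} depends only on the value α(k); more precisely, ∏_{i=1}^N p_i^{α_i(k)} = ∏_{i=1}^N p_i^{α(k) p_i}. -/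
/-- If `x*` satisfies the Lagrange condition `∑ᵢ log(αᵢ(x*)) αᵢ = (λ−1) α` (equality of
linear forms on `ℝ²`, here represented by vectors `v i`), and `pᵢ = αᵢ(x*)/α(x*)`, then for
every lattice point `k ∈ ℤ²` the product `∏ᵢ pᵢ^{αᵢ(k)}` depends only on `α(k)`:
`∏ᵢ pᵢ^{αᵢ(k)} = ∏ᵢ pᵢ^{α(k)·pᵢ}`. -/
theorem stmt_8 (N : ℕ) (v : Fin N → ℝ × ℝ)
    (vs : ℝ × ℝ) (hvs : vs = ∑ i, v i)
    (ev : Fin N → ℝ × ℝ → ℝ) (hev : ∀ i x, ev i x = (v i).1 * x.1 + (v i).2 * x.2)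
    (evs : ℝ × ℝ → ℝ) (hevs : ∀ x, evs x = vs.1 * x.1 + vs.2 * x.2)
    (x : ℝ × ℝ) (hx : ∀ i, 0 < ev i x)
    (lam : ℝ) (hlag : ∑ i, Real.log (ev i x) • v i = (lam - 1) • vs)
    (p : Fin N → ℝ) (hp : ∀ i, p i = ev i x / evs x) :
    ∀ k : ℤ × ℤ,
      ∏ i, p i ^ (ev i ((k.1 : ℝ), (k.2 : ℝ))) =
        ∏ i, p i ^ (evs ((k.1 : ℝ), (k.2 : ℝ)) * p i) := by
  intro k
  rcases Nat.eq_zero_or_pos N with hN | hN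
  · subst hN; simp
  set y : ℝ × ℝ := ((k.1 : ℝ), (k.2 : ℝ)) with hy
  have hsum : ∀ z : ℝ × ℝ, evs z = ∑ i, ev i z := by
    intro z
    simp only [hevs, hev, hvs, Prod.fst_sum, Prod.snd_sum, Finset.sum_mul]
    rw [← Finset.sum_add_distrib]
  have hlag' : ∀ z : ℝ × ℝ,
      ∑ i, Real.log (ev i x) * ev i z = (lam - 1) * evs z := by
    intro z
    have h := congrArg (fun w : ℝ × ℝ => w.1 * z.1 + w.2 * z.2) hlag
    simp only [Prod.fst_sum, Prod.snd_sum, Prod.smul_fst, Prod.smul_snd,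
      smul_eq_mul, Finset.sum_mul] at h
    calc ∑ i, Real.log (ev i x) * ev i z
        = ∑ i, (Real.log (ev i x) * (v i).1 * z.1 + Real.log (ev i x) * (v i).2 * z.2) :=
          Finset.sum_congr rfl fun i _ => by rw [hev i z]; ring
      _ = (lam - 1) * evs z := by
          rw [Finset.sum_add_distrib, hevs]; linear_combination h
  have hxs : 0 < evs x := by
    rw [hsum]
    exact Finset.sum_pos (fun i _ => hx i) (Finset.univ_nonempty_iff.2 ⟨⟨0, hN⟩⟩)
  have hpp : ∀ i, 0 < p i := fun i => by rw [hp]; exact div_pos (hx i) hxs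
  have hlogp : ∀ i, Real.log (p i) = Real.log (ev i x) - Real.log (evs x) := by
    intro i
    rw [hp, Real.log_div (ne_of_gt (hx i)) (ne_of_gt hxs)]
  have hps : ∑ i, p i = 1 := by
    simp only [hp]
    rw [← Finset.sum_div, ← hsum, div_self (ne_of_gt hxs)]
  have hS4 : ∑ i, p i * Real.log (ev i x) = lam - 1 := by
    have := hlag' x
    have h2 : ∑ i, p i * Real.log (ev i x)
        = (∑ i, Real.log (ev i x) * ev i x) / evs x := by
      rw [Finset.sum_div]
      exact Finset.sum_congr rfl fun i _ => by rw [hp]; ring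
    rw [h2, this, mul_div_assoc, div_self (ne_of_gt hxs), mul_one]
  -- turn products into exponentials
  have key : ∑ i, Real.log (p i) * ev i y = ∑ i, Real.log (p i) * (evs y * p i) := by
    simp only [hlogp, sub_mul]
    rw [Finset.sum_sub_distrib, Finset.sum_sub_distrib, hlag' y]
    have h3 : ∑ i, Real.log (evs x) * ev i y = Real.log (evs x) * evs y := by
      rw [← Finset.mul_sum, ← hsum]
    have h1 : ∑ i, Real.log (ev i x) * (evs y * p i) = (lam - 1) * evs y := by
      rw [← hS4, Finset.sum_mul]
      exact Finset.sum_congr rfl fun i _ => by ring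
    have h2 : ∑ i, Real.log (evs x) * (evs y * p i) = Real.log (evs x) * evs y := by
      rw [← Finset.mul_sum, ← Finset.mul_sum, hps]; ring
    rw [h3, h1, h2]
  calc ∏ i, p i ^ ev i y = ∏ i, Real.exp (Real.log (p i) * ev i y) := by
        exact Finset.prod_congr rfl fun i _ => Real.rpow_def_of_pos (hpp i) _
    _ = Real.exp (∑ i, Real.log (p i) * ev i y) := by rw [Real.exp_sum]
    _ = Real.exp (∑ i, Real.log (p i) * (evs y * p i)) := by rw [key]
    _ = ∏ i, p i ^ (evs y * p i) := by
        rw [Real.exp_sum]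
        exact Finset.prod_congr rfl fun i _ => (Real.rpow_def_of_pos (hpp i) _).symm
end
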